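/- arXiv:1712.01941 — 9 statements merged into one kernel-verified Lean document; each statement's English description precedes it below -/
import Mathlib

section
/- For all natural numbers n and m, b_n · b_{n+m} = b_{2n+m} + (−1)^n · b_m. -/
/-- The sequence `a` defined by `a 0 = 0`, `a 1 = 1`, `a (n+2) = l * a (n+1) + a n`. -/
def a (l : ℕ) : ℕ → ℤ
  | 0 => 0
  | 1 => 1
  | n + 2 => l * a l (n + 1) + a l n

/-- The sequence `b` defined by `b 0 = 2`, `b 1 = l`, `b (n+2) = l * b (n+1) + b n`. -/
def b (l : ℕ) : ℕ → ℤ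
  | 0 => 2
  | 1 => (l : ℤ)
  | n + 2 => l * b l (n + 1) + b l n

theorem b_mul_b (l : ℕ) (hl : 0 < l) (n m : ℕ) :
    b l n * b l (n + m) = b l (2 * n + m) + (-1) ^ n * b l m := by
  induction n using Nat.twoStepInduction generalizing m with
  | zero =>
    simp only [b, Nat.zero_add, Nat.mul_zero, pow_zero, one_mul]
    ring
  | one =>
    have h1 : 1 + m = m + 1 := by omega
    have h2 : 2 * 1 + m = m + 2 := by omega
    rw [h1, h2]
    simp only [b]
    ring
  | more n ih1 ih2 =>
    have e1 : (n + 1) + (m + 1) = n + 2 + m := by omega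
    have e2 : n + (m + 2) = n + 2 + m := by omega
    have h1 := ih1 (m + 2)
    have h2 := ih2 (m + 1)
    rw [e1] at h2
    rw [e2] at h1
    have e3 : 2 * (n + 2) + m = (2 * n + m + 2) + 2 := by omega
    have e4 : 2 * (n + 1) + (m + 1) = (2 * n + m + 2) + 1 := by omega
    have e5 : 2 * n + (m + 2) = 2 * n + m + 2 := by omega
    rw [e4] at h2
    rw [e5] at h1
    rw [e3]
    have hb : b l (n + 2) = l * b l (n + 1) + b l n := rfl
    have hb2 : b l (2 * n + m + 2 + 2) =
        l * b l (2 * n + m + 2 + 1) + b l (2 * n + m + 2) := rfl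
    have hbm : b l (m + 2) = l * b l (m + 1) + b l m := rfl
    rw [hb, hb2]
    have : (l : ℤ) * b l (n + 1) * b l (n + 2 + m) + b l n * b l (n + 2 + m)
        = l * (b l (2 * n + m + 2 + 1) + (-1) ^ (n + 1) * b l (m + 1))
          + (b l (2 * n + m + 2) + (-1) ^ n * b l (m + 2)) := by
      rw [← h1, ← h2]; ring
    rw [add_mul] at *
    rw [this, hbm]
    ring
end

section
/- For all natural numbers n and m, a_n · b_{n+m} = a_{2n+m} + (−1)^{n+1} · a_m. -/
lemma b_eq_a (l : ℕ) : ∀ m, b l (m + 1) = a l (m + 2) + a l m := by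
  intro m
  induction m using Nat.twoStepInduction with
  | zero => simp [a, b]
  | one => simp [a, b]; ring
  | more m ih1 ih2 =>
    have h : b l (m + 3) = l * b l (m + 2) + b l (m + 1) := rfl
    have h2 : a l (m + 4) = l * a l (m + 3) + a l (m + 2) := rfl
    have h3 : a l (m + 2) = l * a l (m + 1) + a l m := rfl
    rw [show m + 1 + 1 = m + 2 from rfl, show m + 1 + 2 = m + 3 from rfl] at ih2
    linear_combination h + (l : ℤ) * ih2 + ih1 - h2 - h3

theorem a_mul_b (l : ℕ) (hl : 0 < l) (n m : ℕ) :
    a l n * b l (n + m) = a l (2 * n + m) + (-1) ^ (n + 1) * a l m := by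
  induction n using Nat.twoStepInduction generalizing m with
  | zero => simp [a]
  | one =>
    have h := b_eq_a l m
    rw [show 1 + m = m + 1 from by omega, h,
      show 2 * 1 + m = m + 2 from by omega, show a l 1 = 1 from rfl]
    ring
  | more n ih1 ih2 =>
    have h1 := ih2 (m + 1)
    have h2 := ih1 (m + 2)
    rw [show n + 1 + (m + 1) = n + 2 + m from by omega] at h1
    rw [show n + (m + 2) = n + 2 + m from by omega] at h2
    have ha : a l (n + 2) = l * a l (n + 1) + a l n := rfl
    have hA : a l (2 * (n + 2) + m) =
        l * a l (2 * (n + 1) + (m + 1)) + a l (2 * n + (m + 2)) := by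
      rw [show 2 * (n + 2) + m = (2 * n + m + 2) + 2 from by omega,
        show 2 * (n + 1) + (m + 1) = (2 * n + m + 2) + 1 from by omega,
        show 2 * n + (m + 2) = 2 * n + m + 2 from by omega]
      rfl
    have ham : a l (m + 2) = l * a l (m + 1) + a l m := rfl
    have hs1 : ((-1 : ℤ)) ^ (n + 1 + 1) = -(-1) ^ (n + 1) := by ring
    have hs2 : ((-1 : ℤ)) ^ (n + 2 + 1) = (-1) ^ (n + 1) := by ring
    rw [ha, hA, hs2]
    rw [hs1] at h1
    linear_combination (l : ℤ) * h1 + h2 + (-1) ^ (n + 1) * ham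
end

section
/- For all natural numbers n and m, a_{n+m} · b_n = a_{2n+m} + (−1)^n · a_m. -/
theorem a_add_mul_b (l : ℕ) (hl : 0 < l) (n m : ℕ) :
    a l (n + m) * b l n = a l (2 * n + m) + (-1) ^ n * a l m := by
  induction n using Nat.twoStepInduction generalizing m with
  | zero => simp [a, b]; ring
  | one =>
    rw [show 1 + m = m + 1 from by omega, show 2 * 1 + m = m + 2 from by omega]
    simp [a, b]; ring
  | more n ih1 ih2 =>
    have h1 := ih1 (m + 2)
    have h2 := ih2 (m + 1)
    rw [show n + (m + 2) = n + m + 2 from by omega,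
        show 2 * n + (m + 2) = 2 * n + m + 2 from by omega,
        show a l (m + 2) = l * a l (m + 1) + a l m from rfl] at h1
    rw [show n + 1 + (m + 1) = n + m + 2 from by omega,
        show 2 * (n + 1) + (m + 1) = 2 * n + m + 3 from by omega] at h2
    rw [show n + 2 + m = n + m + 2 from by omega,
        show 2 * (n + 2) + m = 2 * n + m + 2 + 2 from by omega,
        show a l (2 * n + m + 2 + 2) = l * a l (2 * n + m + 2 + 1) + a l (2 * n + m + 2) from rfl,
        show 2 * n + m + 2 + 1 = 2 * n + m + 3 from rfl,
        show b l (n + 2) = l * b l (n + 1) + b l n from rfl]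
    linear_combination (l : ℤ) * h2 + h1
end

section
/- For all natural numbers n and m, (l² + 4) · a_n · a_{n+m} = b_{2n+m} + (−1)^{n+1} · b_m. -/
lemma a_rec (l k : ℕ) : a l (k + 2) = l * a l (k + 1) + a l k := rfl
lemma b_rec (l k : ℕ) : b l (k + 2) = l * b l (k + 1) + b l k := rfl

lemma Da_eq (l : ℕ) : ∀ m, ((l : ℤ) ^ 2 + 4) * a l (m + 1) = b l (m + 2) + b l m := by
  intro m
  induction m using Nat.twoStepInduction with
  | zero => simp [a, b]; ring
  | one => simp [a, b]; ring
  | more m ih1 ih2 =>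
    rw [a_rec l (m + 1), b_rec l (m + 2), b_rec l m] at *
    rw [b_rec l (m + 1)] at ih2 ⊢
    linear_combination (l : ℤ) * ih2 + ih1

theorem a_mul_a (l : ℕ) (hl : 0 < l) (n m : ℕ) :
    ((l : ℤ) ^ 2 + 4) * (a l n * a l (n + m)) = b l (2 * n + m) + (-1) ^ (n + 1) * b l m := by
  induction n using Nat.twoStepInduction generalizing m with
  | zero => simp [a]
  | one =>
    have h := Da_eq l m
    have e1 : 1 + m = m + 1 := by ring
    have e2 : 2 * 1 + m = m + 2 := by ring
    rw [e1, e2]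
    simp [a]
    linarith
  | more n ih1 ih2 =>
    have h1 := ih1 (m + 2)
    have h2 := ih2 (m + 1)
    have e1 : n + (m + 2) = n + m + 2 := by ring
    have e2 : n + 1 + (m + 1) = n + m + 2 := by ring
    have e3 : 2 * n + (m + 2) = 2 * n + m + 2 := by ring
    have e4 : 2 * (n + 1) + (m + 1) = 2 * n + m + 3 := by ring
    have e5 : n + 2 + m = n + m + 2 := by ring
    have e6 : 2 * (n + 2) + m = 2 * n + m + 4 := by ring
    rw [e1, e3] at h1
    rw [e2, e4] at h2
    rw [e5, e6, a_rec l n, b_rec l (2 * n + m + 2)]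
    have hb : b l m = b l (m + 2) - l * b l (m + 1) := by rw [b_rec]; ring
    rw [hb]
    rw [show n + 2 + 1 = n + 1 + 1 + 1 from rfl, pow_succ, pow_succ] at *
    linear_combination (l : ℤ) * h2 + h1
end

section
/- If l is odd and n is a positive natural number with n ≡ 0 (mod 6), then b_{n−1} · b_{n+1} ≡ 3 (mod 4). -/
lemma l_cast_cases (l : ℕ) (hlo : Odd l) : ((l : ZMod 4) = 1 ∨ (l : ZMod 4) = 3) := by
  rw [Nat.odd_iff] at hlo
  have h : l % 4 = 1 ∨ l % 4 = 3 := by omega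
  have hc : ((l : ZMod 4)) = ((l % 4 : ℕ) : ZMod 4) := (ZMod.natCast_mod l 4).symm
  rcases h with h | h <;> rw [hc, h] <;> simp

lemma b_period (l : ℕ) (hlo : Odd l) (m : ℕ) :
    ((b l (m + 6) : ZMod 4)) = ((b l m : ZMod 4)) := by
  have e : ∀ k, b l (k + 2) = l * b l (k + 1) + b l k := fun k => rfl
  have h := e (m + 4)
  rw [e (m + 3), e (m + 2), e (m + 1), e m] at h
  have h4 := congrArg (fun z : ℤ => (z : ZMod 4)) h
  push_cast at h4
  rw [show m + 6 = m + 4 + 2 from rfl, h4]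
  generalize (b l (m+1) : ZMod 4) = v
  generalize (b l m : ZMod 4) = u
  rcases l_cast_cases l hlo with hx | hx <;> rw [hx] <;> revert u v <;> decide

lemma b_period_mul (l : ℕ) (hlo : Odd l) (m k : ℕ) :
    ((b l (m + 6 * k) : ZMod 4)) = ((b l m : ZMod 4)) := by
  induction k with
  | zero => rfl
  | succ k ih =>
      have : m + 6 * (k + 1) = (m + 6 * k) + 6 := by ring
      rw [this, b_period l hlo, ih]

theorem b_mul_b_mod_four_of_six_dvd (l : ℕ) (hl : 0 < l) (hlo : Odd l) (n : ℕ)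
    (hn : 0 < n) (h6 : n % 6 = 0) :
    b l (n - 1) * b l (n + 1) ≡ 3 [ZMOD 4] := by
  obtain ⟨k, hk⟩ : ∃ k, n = 6 * k + 6 := ⟨n / 6 - 1, by omega⟩
  have h1 : n - 1 = 5 + 6 * k := by omega
  have h2 : n + 1 = 7 + 6 * k := by omega
  rw [Int.ModEq] at *
  have : ((b l (n-1) * b l (n+1) : ℤ) : ZMod 4) = ((3 : ℤ) : ZMod 4) := by
    push_cast
    rw [h1, h2, b_period_mul l hlo 5 k, b_period_mul l hlo 7 k]
    have e5 : b l 5 = l^5 + 5*l^3 + 5*l := by show (_ : ℤ) = _; simp [b]; ring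
    have e7 : b l 7 = l^7 + 7*l^5 + 14*l^3 + 7*l := by show (_ : ℤ) = _; simp [b]; ring
    rw [e5, e7]
    push_cast
    rcases l_cast_cases l hlo with hx | hx <;> rw [hx] <;> decide
  rwa [ZMod.intCast_eq_intCast_iff] at this
end

section
/- For every natural number n ≥ 1, the generalized quaternion algebra H_ℚ(−1, a_{2n+1}) splits, i.e. it is isomorphic as a ℚ-algebra to the algebra of 2×2 matrices over ℚ. -/
/-!
The addition formula `a (m + n + 1) = a (m + 1) * a (n + 1) + a m * a n` gives
`a (2n + 1) = a (n + 1)² + a n²`, a norm from `ℚ(i)`, and it is nonzero because consecutive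
terms are coprime. Over a field of characteristic `≠ 2`, `H(α, u² - αv²)` splits as soon as
`α` and `u² - αv²` are nonzero: the matrices `i = [[0, 1], [α, 0]]` and `j = [[u, v], [-αv, -u]]`
anticommute and square to `α` and `u² - αv²`, the algebra map they define is onto `M₂(K)`,
and both sides have dimension four.
-/

namespace QuaternionAlgebra

open Quaternion

variable {K : Type*} [Field K] (α u v : K)

def matrixBasis : Basis (Matrix (Fin 2) (Fin 2) K) α 0 (u ^ 2 - α * v ^ 2) where
  i := !![0, 1; α, 0]
  j := !![u, v; -α * v, -u]
  k := !![-α * v, -u; α * u, α * v]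
  i_mul_i := by ext i j; fin_cases i <;> fin_cases j <;> simp
  j_mul_j := by ext i j; fin_cases i <;> fin_cases j <;> simp <;> ring
  i_mul_j := by ext i j; fin_cases i <;> fin_cases j <;> simp
  j_mul_i := by ext i j; fin_cases i <;> fin_cases j <;> simp <;> ring

theorem matrixBasis_lift (x : ℍ[K, α, u ^ 2 - α * v ^ 2]) :
    (matrixBasis α u v).lift x =
      !![x.re + u * x.imJ - α * v * x.imK, x.imI + v * x.imJ - u * x.imK;
        α * x.imI - α * v * x.imJ + α * u * x.imK, x.re - u * x.imJ + α * v * x.imK] := by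
  ext i j; fin_cases i <;> fin_cases j <;>
    simp [Basis.lift, matrixBasis, Algebra.algebraMap_eq_smul_one] <;> ring

variable [NeZero (2 : K)] {α u v}

theorem matrixBasis_liftHom_surjective (hα : α ≠ 0) (hβ : u ^ 2 - α * v ^ 2 ≠ 0) :
    Function.Surjective (matrixBasis α u v).liftHom := by
  intro m
  refine ⟨⟨(m 0 0 + m 1 1) / 2, (m 0 1 + m 1 0 / α) / 2,
    (u * (m 0 0 - m 1 1) - v * (α * m 0 1 - m 1 0)) / (2 * (u ^ 2 - α * v ^ 2)),
    (v * (m 0 0 - m 1 1) - u * (m 0 1 - m 1 0 / α)) / (2 * (u ^ 2 - α * v ^ 2))⟩, ?_⟩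
  rw [Basis.liftHom_apply, matrixBasis_lift]
  -- otherwise `simp` reorders the factors of `α * v ^ 2` and `field_simp` no longer sees `hβ`
  generalize hβdef : u ^ 2 - α * v ^ 2 = β at hβ
  ext i j; fin_cases i <;> fin_cases j <;> simp
  all_goals field_simp
  all_goals rw [← hβdef]; ring

theorem matrixBasis_liftHom_bijective (hα : α ≠ 0) (hβ : u ^ 2 - α * v ^ 2 ≠ 0) :
    Function.Bijective (matrixBasis α u v).liftHom := by
  have surjective := matrixBasis_liftHom_surjective hα hβ
  have finrank_eq : Module.finrank K ℍ[K, α, u ^ 2 - α * v ^ 2] =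
      Module.finrank K (Matrix (Fin 2) (Fin 2) K) := by
    simp [finrank_eq_four, Module.finrank_matrix]
  refine ⟨?_, surjective⟩
  exact (LinearMap.injective_iff_surjective_of_finrank_eq_finrank finrank_eq
    (f := (matrixBasis α u v).liftHom.toLinearMap)).mpr surjective

noncomputable def matrixEquiv (hα : α ≠ 0) (hβ : u ^ 2 - α * v ^ 2 ≠ 0) :
    ℍ[K, α, u ^ 2 - α * v ^ 2] ≃ₐ[K] Matrix (Fin 2) (Fin 2) K :=
  AlgEquiv.ofBijective _ (matrixBasis_liftHom_bijective hα hβ)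

end QuaternionAlgebra

theorem a_add_two (l n : ℕ) : a l (n + 2) = l * a l (n + 1) + a l n := rfl

theorem a_add_add_one (l m n : ℕ) :
    a l (m + n + 1) = a l (m + 1) * a l (n + 1) + a l m * a l n := by
  induction m using Nat.twoStepInduction generalizing n with
  | zero => simp [a]
  | one => rw [add_comm 1 n, a_add_two]; simp [a]
  | more m ih ih1 =>
    rw [show m + 2 + n + 1 = m + n + 1 + 2 by ring, a_add_two,
      show m + n + 1 + 1 = m + 1 + n + 1 by ring, ih1 n, ih n, a_add_two l (m + 1)]
    linear_combination -a l n * a_add_two l m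

theorem a_two_mul_add_one (l n : ℕ) : a l (2 * n + 1) = a l (n + 1) ^ 2 + a l n ^ 2 := by
  rw [two_mul, a_add_add_one]; ring

theorem isCoprime_a_a_add_one (l n : ℕ) : IsCoprime (a l n) (a l (n + 1)) := by
  induction n with
  | zero => exact isCoprime_one_right
  | succ n ih => rw [a_add_two]; exact ih.symm.mul_add_right_right _

theorem a_two_mul_add_one_ne_zero (l n : ℕ) : a l (2 * n + 1) ≠ 0 := by
  intro h
  rw [a_two_mul_add_one, sq, sq, mul_self_add_mul_self_eq_zero] at h
  obtain ⟨h₁, h₀⟩ := h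
  exact not_isCoprime_zero_zero (h₀ ▸ h₁ ▸ isCoprime_a_a_add_one l n)

open Quaternion in
theorem quat_alg_splits_a_general (l : ℕ) (n : ℕ) :
    Nonempty (ℍ[ℚ, -1, ((a l (2 * n + 1) : ℤ) : ℚ)] ≃ₐ[ℚ] Matrix (Fin 2) (Fin 2) ℚ) := by
  have sum_sq : ((a l (2 * n + 1) : ℤ) : ℚ) = (a l (n + 1) : ℚ) ^ 2 - (-1) * (a l n : ℚ) ^ 2 := by
    rw [a_two_mul_add_one]; push_cast; ring
  have ne_zero : ((a l (2 * n + 1) : ℤ) : ℚ) ≠ 0 := by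
    exact_mod_cast a_two_mul_add_one_ne_zero l n
  rw [sum_sq] at ne_zero ⊢
  exact ⟨QuaternionAlgebra.matrixEquiv (by norm_num) ne_zero⟩

open Quaternion in
/-- The quaternion algebra `H_ℚ(-1, a_{2n+1})` splits. -/
theorem quat_alg_splits_a (l : ℕ) (hl : 0 < l) (n : ℕ) (hn : 1 ≤ n) :
    Nonempty (ℍ[ℚ, -1, ((a l (2 * n + 1) : ℤ) : ℚ)] ≃ₐ[ℚ] Matrix (Fin 2) (Fin 2) ℚ) :=
  quat_alg_splits_a_general l n
end

section
/- For every natural number n ≥ 1, the generalized quaternion algebra H_ℚ(−1, a_{2n+1}·a_{2n−1}) splits, i.e. it is isomorphic as a ℚ-algebra to the algebra of 2×2 matrices over ℚ. -/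
open Quaternion

namespace QuaternionAlgebra

section

variable {R : Type*} [CommRing R]

def Basis.ofNorm (c₁ x y : R) :
    Basis (Matrix (Fin 2) (Fin 2) R) c₁ 0 (x ^ 2 - c₁ * y ^ 2) where
  i := !![0, c₁; 1, 0]
  j := !![x, -c₁ * y; y, -x]
  k := !![c₁ * y, -c₁ * x; x, -c₁ * y]
  i_mul_i := by ext i j; fin_cases i <;> fin_cases j <;> simp
  j_mul_j := by ext i j; fin_cases i <;> fin_cases j <;> simp <;> ring
  i_mul_j := by ext i j; fin_cases i <;> fin_cases j <;> simp
  j_mul_i := by ext i j; fin_cases i <;> fin_cases j <;> simp <;> ring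

theorem Basis.liftHom_ofNorm_apply (c₁ x y : R) (q : ℍ[R, c₁, 0, x ^ 2 - c₁ * y ^ 2]) :
    (Basis.ofNorm c₁ x y).liftHom q =
      !![q.re + q.imJ * x + q.imK * c₁ * y, c₁ * (q.imI - q.imJ * y - q.imK * x);
        q.imI + q.imJ * y + q.imK * x, q.re - q.imJ * x - q.imK * c₁ * y] := by
  ext i j; fin_cases i <;> fin_cases j <;>
    simp [Basis.lift, Basis.ofNorm, Algebra.algebraMap_eq_smul_one] <;> ring

end

section

variable {K : Type*} [Field K] [NeZero (2 : K)] {c₁ x y : K}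

theorem Basis.liftHom_ofNorm_injective (hc₁ : c₁ ≠ 0) (hN : x ^ 2 - c₁ * y ^ 2 ≠ 0) :
    Function.Injective (Basis.ofNorm c₁ x y).liftHom := by
  rw [injective_iff_map_eq_zero]
  intro q hq
  rw [Basis.liftHom_ofNorm_apply, ← Matrix.ext_iff] at hq
  have h00 := hq 0 0
  have h01 := hq 0 1
  have h10 := hq 1 0
  have h11 := hq 1 1
  simp only [Matrix.of_apply, Matrix.cons_val', Matrix.cons_val_zero, Matrix.cons_val_one,
    Matrix.cons_val_fin_one, Matrix.zero_apply, mul_eq_zero] at h00 h01 h10 h11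
  replace h01 := h01.resolve_left hc₁
  have hre : q.re = 0 :=
    (mul_eq_zero.mp (by linear_combination h00 + h11 : (2 : K) * q.re = 0)).resolve_left
      two_ne_zero
  have hI : q.imI = 0 :=
    (mul_eq_zero.mp (by linear_combination h01 + h10 : (2 : K) * q.imI = 0)).resolve_left
      two_ne_zero
  have hs : q.imJ * x + q.imK * c₁ * y = 0 := by linear_combination h00 - hre
  have ht : q.imJ * y + q.imK * x = 0 := by linear_combination h10 - hI
  have hJ : q.imJ = 0 :=
    (mul_eq_zero.mp (by linear_combination x * hs - c₁ * y * ht :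
      q.imJ * (x ^ 2 - c₁ * y ^ 2) = 0)).resolve_right hN
  have hK : q.imK = 0 :=
    (mul_eq_zero.mp (by linear_combination x * ht - y * hs :
      q.imK * (x ^ 2 - c₁ * y ^ 2) = 0)).resolve_right hN
  ext <;> assumption

noncomputable def algEquivMatrixOfNorm (hc₁ : c₁ ≠ 0) (hN : x ^ 2 - c₁ * y ^ 2 ≠ 0) :
    ℍ[K, c₁, 0, x ^ 2 - c₁ * y ^ 2] ≃ₐ[K] Matrix (Fin 2) (Fin 2) K :=
  have hinj := Basis.liftHom_ofNorm_injective hc₁ hN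
  have hrank : Module.finrank K ℍ[K, c₁, 0, x ^ 2 - c₁ * y ^ 2] =
      Module.finrank K (Matrix (Fin 2) (Fin 2) K) := by
    simp [finrank_eq_four, Module.finrank_matrix]
  AlgEquiv.ofBijective _
    ⟨hinj, LinearMap.injective_iff_surjective_of_finrank_eq_finrank hrank
      (f := (Basis.ofNorm c₁ x y).liftHom.toLinearMap) |>.mp hinj⟩

end

end QuaternionAlgebra

theorem a_add_two_mul_a (l n : ℕ) : a l (n + 2) * a l n = a l (n + 1) ^ 2 - (-1) ^ n := by
  induction n with
  | zero => simp [a]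
  | succ n ih =>
    have h : a l (n + 2) = l * a l (n + 1) + a l n := rfl
    rw [show a l (n + 3) = l * a l (n + 2) + a l (n + 1) from rfl]
    linear_combination (-a l (n + 2)) * h - ih

theorem a_odd_mul_a_odd (l m : ℕ) :
    a l (2 * m + 3) * a l (2 * m + 1) = a l (2 * m + 2) ^ 2 + 1 := by
  rw [a_add_two_mul_a, Odd.neg_one_pow ⟨m, rfl⟩]
  ring

open Quaternion in
theorem quat_alg_splits_aa_general (l : ℕ) (n : ℕ) (hn : 1 ≤ n) :
    Nonempty (ℍ[ℚ, -1, ((a l (2 * n + 1) * a l (2 * n - 1) : ℤ) : ℚ)] ≃ₐ[ℚ]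
      Matrix (Fin 2) (Fin 2) ℚ) := by
  obtain ⟨m, rfl⟩ := Nat.exists_eq_add_of_le' hn
  have hnorm : ((a l (2 * (m + 1) + 1) * a l (2 * (m + 1) - 1) : ℤ) : ℚ) =
      (a l (2 * m + 2) : ℚ) ^ 2 - (-1) * 1 ^ 2 := by
    rw [show 2 * (m + 1) + 1 = 2 * m + 3 by ring, show 2 * (m + 1) - 1 = 2 * m + 1 by omega,
      a_odd_mul_a_odd]
    push_cast
    ring
  rw [hnorm]
  exact ⟨QuaternionAlgebra.algEquivMatrixOfNorm (by norm_num) (by norm_num; positivity)⟩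

open Quaternion in
/-- The quaternion algebra `H_ℚ(-1, a_{2n+1}·a_{2n-1})` splits. -/
theorem quat_alg_splits_aa (l : ℕ) (hl : 0 < l) (n : ℕ) (hn : 1 ≤ n) :
    Nonempty (ℍ[ℚ, -1, ((a l (2 * n + 1) * a l (2 * n - 1) : ℤ) : ℚ)] ≃ₐ[ℚ]
      Matrix (Fin 2) (Fin 2) ℚ) :=
  quat_alg_splits_aa_general l n hn
end

section
/- For every natural number n ≥ 1, the generalized quaternion algebra H_ℚ(−1, −b_{n+1}·b_{n−1}) is a division algebra; equivalently, every nonzero element of H_ℚ(−1, −b_{n+1}·b_{n−1}) is a unit. -/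
theorem b_pos {l : ℕ} (hl : 0 < l) (m : ℕ) : 0 < b l m := by
  induction m using Nat.strong_induction_on with
  | _ m ih =>
    match m, ih with
    | 0, _ => simp [b]
    | 1, _ => simpa [b] using hl
    | k + 2, ih =>
      have hk₁ := ih (k + 1) (by omega)
      have hk := ih k (by omega)
      simp only [b]
      positivity

namespace QuaternionAlgebra

open Quaternion

theorem re_mul_star_of_c₂_eq_zero {R : Type*} [CommRing R] {c₁ c₃ : R} (x : ℍ[R,c₁,0,c₃]) :
    (x * star x).re = x.re ^ 2 - c₁ * x.imI ^ 2 - c₃ * x.imJ ^ 2 + c₁ * c₃ * x.imK ^ 2 := by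
  simp only [re_mul, re_star, imI_star, imJ_star, imK_star]
  ring

theorem re_mul_star_pos {R : Type*} [CommRing R] [LinearOrder R] [IsStrictOrderedRing R]
    {c₁ c₃ : R} (hc₁ : c₁ < 0) (hc₃ : c₃ < 0) {x : ℍ[R,c₁,0,c₃]} (hx : x ≠ 0) :
    0 < (x * star x).re := by
  rw [re_mul_star_of_c₂_eq_zero]
  have hc₁c₃ : 0 < c₁ * c₃ := mul_pos_of_neg_of_neg hc₁ hc₃
  have hcoord : x.re ≠ 0 ∨ x.imI ≠ 0 ∨ x.imJ ≠ 0 ∨ x.imK ≠ 0 := by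
    by_contra! h
    exact hx (by ext <;> simp [h])
  have h₀ := sq_nonneg x.re
  have h₁ := mul_nonneg (neg_nonneg.2 hc₁.le) (sq_nonneg x.imI)
  have h₂ := mul_nonneg (neg_nonneg.2 hc₃.le) (sq_nonneg x.imJ)
  have h₃ := mul_nonneg hc₁c₃.le (sq_nonneg x.imK)
  rcases hcoord with h | h | h | h
  · linarith [sq_pos_of_ne_zero h]
  · linarith [mul_pos (neg_pos.2 hc₁) (sq_pos_of_ne_zero h)]
  · linarith [mul_pos (neg_pos.2 hc₃) (sq_pos_of_ne_zero h)]
  · linarith [mul_pos hc₁c₃ (sq_pos_of_ne_zero h)]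

theorem isUnit_of_re_mul_star_ne_zero {R : Type*} [Field R] {c₁ c₂ c₃ : R}
    {x : ℍ[R,c₁,c₂,c₃]} (hx : (x * star x).re ≠ 0) : IsUnit x := by
  have hnorm : IsUnit (x * star x) := by
    rw [mul_star_eq_coe, ← coe_algebraMap]
    exact hx.isUnit.map _
  exact ((star_comm_self (x := x)).symm.isUnit_mul_iff.mp hnorm).1

end QuaternionAlgebra

open Quaternion in
theorem quat_alg_division_neg_bb_general (l : ℕ) (hl : 0 < l) (n : ℕ) :
    ∀ x : ℍ[ℚ, -1, ((-(b l (n + 1) * b l (n - 1)) : ℤ) : ℚ)], x ≠ 0 → IsUnit x := by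
  have hc : ((-(b l (n + 1) * b l (n - 1)) : ℤ) : ℚ) < 0 := by
    exact_mod_cast neg_neg_of_pos (mul_pos (b_pos hl (n + 1)) (b_pos hl (n - 1)))
  intro x hx
  exact QuaternionAlgebra.isUnit_of_re_mul_star_ne_zero
    (QuaternionAlgebra.re_mul_star_pos (by norm_num) hc hx).ne'

open Quaternion in
/-- The quaternion algebra `H_ℚ(-1, -b_{n+1}·b_{n-1})` is a division algebra. -/
theorem quat_alg_division_neg_bb (l : ℕ) (hl : 0 < l) (n : ℕ) (hn : 1 ≤ n) :
    ∀ x : ℍ[ℚ, -1, ((-(b l (n + 1) * b l (n - 1)) : ℤ) : ℚ)], x ≠ 0 → IsUnit x :=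
  quat_alg_division_neg_bb_general l hl n
end

section
/- If l is odd and n is a positive natural number with n ≡ 0 (mod 6), then the generalized quaternion algebra H_ℚ(−1, b_{n+1}·b_{n−1}) is a division algebra; equivalently, every nonzero element of H_ℚ(−1, b_{n+1}·b_{n−1}) is a unit. -/
open Quaternion

theorem QuaternionAlgebra.isUnit_of_re_mul_star_ne_zero_s19 {K : Type*} [Field K] {c₁ c₂ c₃ : K}
    {x : ℍ[K,c₁,c₂,c₃]} (h : (x * star x).re ≠ 0) : IsUnit x := by
  have hunit : IsUnit (x * star x) := by
    rw [mul_star_eq_coe, ← coe_algebraMap]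
    exact (isUnit_iff_ne_zero.mpr h).map _
  have hcomm : Commute x (star x) := (star_comm_self' x).symm
  exact (hcomm.isUnit_mul_iff.mp hunit).1

section Descent

variable {β : ℤ}

theorem Int.two_dvd_of_sq_add_sq_eq_mul_sq (hβ : β % 4 = 3) {p q r : ℤ}
    (h : p ^ 2 + q ^ 2 = β * r ^ 2) : 2 ∣ p ∧ 2 ∣ q ∧ 2 ∣ r := by
  have hβ' : (β : ZMod 4) = 3 := by simpa [hβ] using (ZMod.intCast_mod β 4).symm
  have h4 : (p : ZMod 4) ^ 2 + (q : ZMod 4) ^ 2 = 3 * (r : ZMod 4) ^ 2 := by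
    rw [← hβ']; exact_mod_cast congrArg (Int.cast : ℤ → ZMod 4) h
  have key : ∀ x y z : ZMod 4, x ^ 2 + y ^ 2 = 3 * z ^ 2 → 2 * x = 0 ∧ 2 * y = 0 ∧ 2 * z = 0 := by
    decide
  have two_dvd : ∀ x : ℤ, 2 * (x : ZMod 4) = 0 → 2 ∣ x := fun x hx => by
    have : ((4 : ℕ) : ℤ) ∣ 2 * x :=
      (ZMod.intCast_zmod_eq_zero_iff_dvd _ 4).mp (by push_cast; exact hx)
    omega
  obtain ⟨hp, hq, hr⟩ := key _ _ _ h4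
  exact ⟨two_dvd p hp, two_dvd q hq, two_dvd r hr⟩

theorem Int.eq_zero_of_sq_add_sq_eq_mul_sq (hβ : β % 4 = 3) {p q r : ℤ}
    (h : p ^ 2 + q ^ 2 = β * r ^ 2) : r = 0 := by
  induction hm : r.natAbs using Nat.strong_induction_on generalizing p q r with
  | _ m ih =>
    obtain ⟨⟨p, rfl⟩, ⟨q, rfl⟩, ⟨r, rfl⟩⟩ := Int.two_dvd_of_sq_add_sq_eq_mul_sq hβ h
    have h' : p ^ 2 + q ^ 2 = β * r ^ 2 := by linarith
    rcases eq_or_ne r 0 with rfl | hr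
    · rfl
    · exact absurd (ih _ (by omega) h' rfl) hr

theorem Rat.eq_zero_of_sq_add_sq_eq_mul_sq (hβ : β % 4 = 3) {p q r : ℚ}
    (h : p ^ 2 + q ^ 2 = β * r ^ 2) : r = 0 := by
  have hint : (p.num * q.den * r.den) ^ 2 + (q.num * p.den * r.den) ^ 2
      = β * (r.num * p.den * q.den) ^ 2 := by
    have : ((p.num * q.den * r.den : ℤ) : ℚ) ^ 2 + ((q.num * p.den * r.den : ℤ) : ℚ) ^ 2
        = β * ((r.num * p.den * q.den : ℤ) : ℚ) ^ 2 := by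
      push_cast [← Rat.mul_den_eq_num]
      linear_combination ((p.den : ℚ) * q.den * r.den) ^ 2 * h
    exact_mod_cast this
  have := Int.eq_zero_of_sq_add_sq_eq_mul_sq hβ hint
  simpa [Rat.num_eq_zero] using this

theorem Rat.eq_zero_of_sq_add_sq_eq_mul_sq_add_sq (hβ : β % 4 = 3) {x₀ x₁ x₂ x₃ : ℚ}
    (h : x₀ ^ 2 + x₁ ^ 2 = β * (x₂ ^ 2 + x₃ ^ 2)) : x₀ = 0 ∧ x₁ = 0 ∧ x₂ = 0 ∧ x₃ = 0 := by
  -- the two-square identity `(x₀² + x₁²)(x₂² + x₃²) = (x₀x₂ + x₁x₃)² + (x₀x₃ - x₁x₂)²`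
  have h₂₃ : x₂ ^ 2 + x₃ ^ 2 = 0 :=
    Rat.eq_zero_of_sq_add_sq_eq_mul_sq hβ (p := x₀ * x₂ + x₁ * x₃) (q := x₀ * x₃ - x₁ * x₂)
      (by linear_combination (x₂ ^ 2 + x₃ ^ 2) * h)
  have h₀₁ : x₀ ^ 2 + x₁ ^ 2 = 0 := by rw [h, h₂₃, mul_zero]
  rw [add_eq_zero_iff_of_nonneg (sq_nonneg _) (sq_nonneg _)] at h₀₁ h₂₃
  simp_all

theorem QuaternionAlgebra.re_mul_star_ne_zero_of_emod_four (hβ : β % 4 = 3)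
    {x : ℍ[ℚ,-1,(β : ℚ)]} (hx : x ≠ 0) : (x * star x).re ≠ 0 := by
  have hnorm : (x * star x).re = x.re ^ 2 + x.imI ^ 2 - β * (x.imJ ^ 2 + x.imK ^ 2) := by
    simp only [re_mul, re_star, imI_star, imJ_star, imK_star]; ring
  intro h0
  obtain ⟨h₀, h₁, h₂, h₃⟩ :=
    Rat.eq_zero_of_sq_add_sq_eq_mul_sq_add_sq hβ (x₀ := x.re) (x₁ := x.imI) (x₂ := x.imJ)
      (x₃ := x.imK) (by linear_combination hnorm.symm.trans h0)
  exact hx (by ext <;> simp [h₀, h₁, h₂, h₃])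

end Descent

theorem b_add_two_mul_b_sub_sq (l n : ℕ) :
    b l (n + 2) * b l n - b l (n + 1) ^ 2 = (-1) ^ n * ((l : ℤ) ^ 2 + 4) := by
  induction n with
  | zero => simp only [b]; ring
  | succ n ih =>
    rw [show b l (n + 1 + 2) = l * b l (n + 2) + b l (n + 1) from rfl,
      show b l (n + 2) = l * b l (n + 1) + b l n from rfl] at *
    linear_combination -ih

theorem two_dvd_b_three_mul {l : ℕ} (hl : Odd l) (k : ℕ) : 2 ∣ b l (3 * k) := by
  have h2 : (2 : ℤ) ∣ (l : ℤ) ^ 2 + 1 := (hl.natCast.pow.add_one).two_dvd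
  induction k with
  | zero => simp [b]
  | succ k ih =>
    have : b l (3 * (k + 1)) = ((l : ℤ) ^ 2 + 1) * b l (3 * k + 1) + l * b l (3 * k) := by
      rw [show 3 * (k + 1) = 3 * k + 1 + 2 by ring]
      simp only [b]; ring
    rw [this]
    exact dvd_add (h2.mul_right _) (ih.mul_left _)

theorem b_succ_mul_b_pred_emod_four {l n : ℕ} (hl : Odd l) (hn : 0 < n) (h6 : n % 6 = 0) :
    (b l (n + 1) * b l (n - 1)) % 4 = 3 := by
  obtain ⟨k, rfl⟩ : 3 ∣ n := by omega
  have hcassini := b_add_two_mul_b_sub_sq l (3 * k - 1)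
  rw [show 3 * k - 1 + 2 = 3 * k + 1 by omega, show 3 * k - 1 + 1 = 3 * k by omega,
    Odd.neg_one_pow (Nat.odd_iff.mpr (by omega))] at hcassini
  have hb : 2 ^ 2 ∣ b l (3 * k) ^ 2 := pow_dvd_pow_of_dvd (two_dvd_b_three_mul hl k) 2
  have hl4 := Int.sq_mod_four_eq_one_of_odd hl.natCast
  omega

open Quaternion in
theorem quat_alg_division_bb_general (l : ℕ) (hlo : Odd l) (n : ℕ)
    (hn : 0 < n) (h6 : n % 6 = 0) :
    ∀ x : ℍ[ℚ, -1, ((b l (n + 1) * b l (n - 1) : ℤ) : ℚ)], x ≠ 0 → IsUnit x := fun _ hx =>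
  QuaternionAlgebra.isUnit_of_re_mul_star_ne_zero_s19 <|
    QuaternionAlgebra.re_mul_star_ne_zero_of_emod_four (b_succ_mul_b_pred_emod_four hlo hn h6) hx

open Quaternion in
/-- If `l` is odd and `6 ∣ n`, the quaternion algebra `H_ℚ(-1, b_{n+1}·b_{n-1})`
is a division algebra. -/
theorem quat_alg_division_bb (l : ℕ) (hl : 0 < l) (hlo : Odd l) (n : ℕ)
    (hn : 0 < n) (h6 : n % 6 = 0) :
    ∀ x : ℍ[ℚ, -1, ((b l (n + 1) * b l (n - 1) : ℤ) : ℚ)], x ≠ 0 → IsUnit x :=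
  quat_alg_division_bb_general l hlo n hn h6
end
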